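/- Let L be a positive integer, let d ∈ ℍ and x ∈ ℍ^L be fixed, and let f : ℍ^L → ℍ be the function f(w) = (Σ_{l} w_l·x_l)·d*. Then for every index m and every point w ∈ ℍ^L, the m-th HR*-partial derivative of f at w equals −(1/2)·d·x_m*; that is, ∂(wᵀx·d*)/∂w_m* = −(1/2)·d·x_m*. -/

import Mathlib

open Quaternion

/-- The imaginary unit `i` of the real quaternions. -/
def qI : ℍ[ℝ] := ⟨0, 1, 0, 0⟩

/-- The imaginary unit `j` of the real quaternions. -/
def qJ : ℍ[ℝ] := ⟨0, 0, 1, 0⟩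

/-- The imaginary unit `k` of the real quaternions. -/
def qK : ℍ[ℝ] := ⟨0, 0, 0, 1⟩

/-- The `m`-th HR*-partial derivative of `f : ℍ^L → ℍ` at `w`:
`(1/4) (D_{1,m} f(w) + (D_{i,m} f(w))·i + (D_{j,m} f(w))·j + (D_{k,m} f(w))·k)`,
where `D_{v,m} f(w)` is the real Fréchet derivative of `f` at `w` in direction `v·e_m`. -/
noncomputable def HRStarPartial {L : ℕ} (f : (Fin L → ℍ[ℝ]) → ℍ[ℝ]) (m : Fin L)
    (w : Fin L → ℍ[ℝ]) : ℍ[ℝ] :=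
  (4 : ℍ[ℝ])⁻¹ * (fderiv ℝ f w (Pi.single m 1) + fderiv ℝ f w (Pi.single m qI) * qI
    + fderiv ℝ f w (Pi.single m qJ) * qJ + fderiv ℝ f w (Pi.single m qK) * qK)

/-! The map `w ↦ (wᵀx) d*` is `ℝ`-linear, so its derivative in direction `q e_m` is
`q x_m d*`. The HR*-derivative is therefore `¼ (a + i a i + j a j + k a k)` with `a = x_m d*`,
and the sum of `a` and its three sandwiches by imaginary units is `-2 a*`. -/

instance {R : Type*} [CommRing R] [CharZero R] : CharZero ℍ[R] :=
  charZero_of_injective_algebraMap (Quaternion.coe_injective (R := R))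

theorem add_sandwich_qI_qJ_qK_eq_neg_two_mul_star (a : ℍ[ℝ]) :
    a + qI * a * qI + qJ * a * qJ + qK * a * qK = -2 * star a := by
  rw [show (-2 : ℍ[ℝ]) = ((-2 : ℝ) : ℍ[ℝ]) by norm_cast]
  ext <;> simp [Quaternion.re_mul, Quaternion.imI_mul, Quaternion.imJ_mul, Quaternion.imK_mul] <;>
    simp [qI, qJ, qK] <;> ring

section rightDot

variable {𝕜 A ι : Type*} [NontriviallyNormedField 𝕜] [NormedRing A] [NormedAlgebra 𝕜 A]
  [Fintype ι]

noncomputable def rightDot (c : ι → A) : (ι → A) →L[𝕜] A :=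
  ∑ l, (ContinuousLinearMap.mul 𝕜 A).flip (c l) ∘L ContinuousLinearMap.proj l

theorem rightDot_apply (c v : ι → A) : rightDot (𝕜 := 𝕜) c v = ∑ l, v l * c l := by
  simp [rightDot]

theorem rightDot_single [DecidableEq ι] (c : ι → A) (m : ι) (q : A) :
    rightDot (𝕜 := 𝕜) c (Pi.single m q) = q * c m := by
  rw [rightDot_apply, Finset.sum_eq_single m (fun l _ hl => by simp [hl]) (by simp)]
  simp

end rightDot

theorem HRStarPartial_eq_of_map_single {L : ℕ} (f : (Fin L → ℍ[ℝ]) →L[ℝ] ℍ[ℝ]) (m : Fin L)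
    (b : ℍ[ℝ]) (hf : ∀ q, f (Pi.single m q) = q * b) (w : Fin L → ℍ[ℝ]) :
    HRStarPartial f m w = -(2 : ℍ[ℝ])⁻¹ * star b := by
  simp only [HRStarPartial, ContinuousLinearMap.fderiv, hf, one_mul]
  rw [add_sandwich_qI_qJ_qK_eq_neg_two_mul_star, ← mul_assoc]
  norm_num

theorem hr_star_partial_wTx_dstar_general (L : ℕ) (d : ℍ[ℝ]) (x : Fin L → ℍ[ℝ])
    (m : Fin L) (w : Fin L → ℍ[ℝ]) :
    HRStarPartial (fun v => (∑ l, v l * x l) * star d) m w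
      = -(2 : ℍ[ℝ])⁻¹ * (d * star (x m)) := by
  have hf : (fun v => (∑ l, v l * x l) * star d) = rightDot (𝕜 := ℝ) fun l => x l * star d := by
    ext1 v
    simp [rightDot_apply, Finset.sum_mul, mul_assoc]
  rw [hf, HRStarPartial_eq_of_map_single _ m _ (rightDot_single _ m), star_mul, star_star]

/-- ∂(wᵀx·d*)/∂w_m* = −(1/2)·d·x_m*. -/
theorem hr_star_partial_wTx_dstar (L : ℕ) (hL : 0 < L) (d : ℍ[ℝ]) (x : Fin L → ℍ[ℝ])
    (m : Fin L) (w : Fin L → ℍ[ℝ]) :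
    HRStarPartial (fun v => (∑ l, v l * x l) * star d) m w
      = -(2 : ℍ[ℝ])⁻¹ * (d * star (x m)) :=
  hr_star_partial_wTx_dstar_general L d x m w
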